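/- arXiv:2412.13372 — 2 statements merged into one kernel-verified Lean document; each statement's English description precedes it below -/
import Mathlib

section
/- The Motzkin polynomial x₁⁴x₂² + x₁²x₂⁴ - 3x₁²x₂² + 1 is not a sum of squares of real polynomials in x₁, x₂. -/
/-!
Suppose the Motzkin polynomial `M` equals `∑ qᵢ²`. In any monomial order the leading terms of
the squares `qᵢ²` have positive coefficients and cannot cancel, so `deg qᵢ ≤ 3`. Setting
`x₂ = 0` (or `x₁ = 0`) turns `M` into `1`, so each `qᵢ` is constant on both axes. Hence the
monomials of `qᵢ` are among `1, x₁x₂, x₁²x₂, x₁x₂²`, and the only product of two of them equal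
to `x₁²x₂²` is `(x₁x₂)²`. Comparing coefficients of `x₁²x₂²` gives `-3 = ∑ cᵢ² ≥ 0`.
-/

open MvPolynomial MonomialOrder

theorem MonomialOrder.degree_sq_le_degree_sum_sq {σ R ι : Type*} [CommRing R] [LinearOrder R]
    [IsStrictOrderedRing R] (m : MonomialOrder σ) (s : Finset ι) (q : ι → MvPolynomial σ R)
    {i : ι} (hi : i ∈ s) : m.degree (q i ^ 2) ≼[m] m.degree (∑ j ∈ s, q j ^ 2) := by
  obtain ⟨j, hj, hmax⟩ := s.exists_max_image (fun j ↦ m.toSyn (m.degree (q j))) ⟨i, hi⟩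
  set d := m.degree (q j)
  calc m.toSyn (m.degree (q i ^ 2)) = m.toSyn (2 • m.degree (q i)) := by rw [m.degree_pow]
    _ ≤ m.toSyn (2 • d) := by simpa only [map_nsmul] using nsmul_le_nsmul_right (hmax i hi) 2
    _ ≤ m.toSyn (m.degree (∑ j ∈ s, q j ^ 2)) := by
      rcases eq_or_ne (q j) 0 with hqj | hqj
      · simp [d, hqj, m.zero_le]
      refine m.le_degree (mem_support_iff.mpr (ne_of_gt ?_))
      rw [coeff_sum]
      refine Finset.sum_pos' (fun k hk ↦ ?_) ⟨j, hj, ?_⟩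
      · rcases eq_or_ne (m.degree (q k)) d with hk' | hk'
        · rw [← hk', m.coeff_pow_nsmul_degree]
          exact sq_nonneg _
        · refine (m.coeff_eq_zero_of_lt ?_).ge
          calc m.toSyn (m.degree (q k ^ 2)) ≤ m.toSyn (2 • m.degree (q k)) := m.degree_pow_le 2
            _ < m.toSyn (2 • d) := by
              simpa only [map_nsmul] using nsmul_lt_nsmul_right two_ne_zero
                (lt_of_le_of_ne (hmax k hk) (m.toSyn.injective.ne hk'))
      · rw [m.coeff_pow_nsmul_degree]
        exact sq_pos_of_ne_zero (m.leadingCoeff_ne_zero_iff.mpr hqj)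

namespace MvPolynomial

theorem two_mul_totalDegree_le_totalDegree_sum_sq {σ R ι : Type*} [CommRing R] [LinearOrder R]
    [IsStrictOrderedRing R] (s : Finset ι) (q : ι → MvPolynomial σ R) {i : ι} (hi : i ∈ s) :
    2 * (q i).totalDegree ≤ (∑ j ∈ s, q j ^ 2).totalDegree := by
  cases exists_wellFoundedGT σ
  rw [← degree_degLexDegree, ← degree_degLexDegree, ← smul_eq_mul, ← map_nsmul,
    ← degLex.degree_pow]
  exact Finsupp.DegLex.monotone_degree (degLex.degree_sq_le_degree_sum_sq s q hi)

theorem eq_zero_of_mem_support_of_totalDegree_killCompl_eq_zero {σ τ R : Type*}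
    [CommSemiring R] {f : τ → σ} (hf : Function.Injective f) {q : MvPolynomial σ R}
    (hq : (killCompl hf q).totalDegree = 0) {s : σ →₀ ℕ} (hs : s ∈ q.support)
    (hsf : ↑s.support ⊆ Set.range f) : s = 0 := by
  set t := s.comapDomain f hf.injOn
  have hts : t.mapDomain f = s := Finsupp.mapDomain_comapDomain f hf s hsf
  have ht : t ∈ (killCompl hf q).support := by
    rwa [mem_support_iff, coeff_killCompl, hts, ← mem_support_iff]
  have ht0 : t.degree = 0 := Nat.eq_zero_of_le_zero (hq ▸ le_totalDegree ht)
  rw [← hts, (Finsupp.degree_eq_zero_iff t).mp ht0, Finsupp.mapDomain_zero]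

theorem coeff_add_self_sq {σ R : Type*} [CommSemiring R] {q : MvPolynomial σ R} {u : σ →₀ ℕ}
    (hu : ∀ s ∈ q.support, ∀ t ∈ q.support, s + t = u + u → s = u) :
    coeff (u + u) (q ^ 2) = coeff u q ^ 2 := by
  classical
  rw [sq, sq, coeff_mul, Finset.sum_eq_single (u, u)]
  · rintro ⟨s, t⟩ hst hne
    rw [Finset.HasAntidiagonal.mem_antidiagonal] at hst
    by_contra hst0
    have hsu := hu s (mem_support_iff.mpr (left_ne_zero_of_mul hst0)) t
      (mem_support_iff.mpr (right_ne_zero_of_mul hst0)) hst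
    subst hsu
    exact hne (Prod.ext rfl (add_left_cancel hst))
  · simp

end MvPolynomial

noncomputable def motzkin : MvPolynomial (Fin 2) ℝ :=
  X 0 ^ 4 * X 1 ^ 2 + X 0 ^ 2 * X 1 ^ 4 - C 3 * X 0 ^ 2 * X 1 ^ 2 + 1

theorem totalDegree_motzkin_le : motzkin.totalDegree ≤ 6 := by
  have hmon (a b : ℕ) : (X 0 ^ a * X 1 ^ b : MvPolynomial (Fin 2) ℝ).totalDegree ≤ a + b :=
    (totalDegree_mul _ _).trans (by simp [totalDegree_X_pow])
  unfold motzkin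
  refine (totalDegree_add _ _).trans (max_le ((totalDegree_sub _ _).trans (max_le
    ((totalDegree_add _ _).trans (max_le (hmon 4 2) (hmon 2 4))) ?_)) (by simp))
  rw [mul_assoc]
  exact (totalDegree_mul _ _).trans (by simpa using (hmon 2 2).trans (by norm_num))

theorem killCompl_motzkin (j : Fin 2) :
    killCompl (Subtype.val_injective (p := (· ≠ j))) motzkin = 1 := by
  fin_cases j <;> simp [motzkin, killCompl]

theorem coeff_motzkin :
    coeff (Finsupp.single 0 1 + Finsupp.single 1 1 + (Finsupp.single 0 1 + Finsupp.single 1 1))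
      motzkin = -3 := by
  simp [motzkin, X_pow_eq_monomial, monomial_mul, C_mul_monomial, coeff_monomial, coeff_one,
    Finsupp.ext_iff, Fin.forall_fin_two]

theorem eq_single_add_single_of_add_eq {s t : Fin 2 →₀ ℕ}
    (hs : s.degree ≤ 3 ∧ ∀ j, s j = 0 → s = 0) (ht : t.degree ≤ 3 ∧ ∀ j, t j = 0 → t = 0)
    (hst : s + t =
      Finsupp.single 0 1 + Finsupp.single 1 1 + (Finsupp.single 0 1 + Finsupp.single 1 1)) :
    s = Finsupp.single 0 1 + Finsupp.single 1 1 := by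
  have h0 : s 0 + t 0 = 2 := by simpa using DFunLike.congr_fun hst 0
  have h1 : s 1 + t 1 = 2 := by simpa using DFunLike.congr_fun hst 1
  simp only [Finsupp.degree_eq_sum, Fin.sum_univ_two] at hs ht
  have hs' : ∀ j, s j ≠ 0 := fun j hj ↦ by
    obtain rfl := hs.2 j hj
    simp only [Finsupp.coe_zero, Pi.zero_apply, zero_add] at h0 h1
    omega
  have ht' : ∀ j, t j ≠ 0 := fun j hj ↦ by
    obtain rfl := ht.2 j hj
    simp only [Finsupp.coe_zero, Pi.zero_apply, add_zero] at h0 h1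
    omega
  have hs0 : s 0 = 1 := by have := hs' 0; have := ht' 0; omega
  have hs1 : s 1 = 1 := by have := hs' 1; have := ht' 1; omega
  ext j; fin_cases j <;> simp [hs0, hs1]

section SumOfSquares

variable {m : ℕ} {q : Fin m → MvPolynomial (Fin 2) ℝ}

theorem totalDegree_le_three_of_motzkin_eq_sum_sq (h : motzkin = ∑ i, q i ^ 2) (i : Fin m) :
    (q i).totalDegree ≤ 3 := by
  have := two_mul_totalDegree_le_totalDegree_sum_sq Finset.univ q (Finset.mem_univ i)
  rw [← h] at this
  linarith [totalDegree_motzkin_le]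

theorem eq_zero_of_mem_support_of_motzkin_eq_sum_sq (h : motzkin = ∑ i, q i ^ 2) (i : Fin m)
    {s : Fin 2 →₀ ℕ} (hs : s ∈ (q i).support) (j : Fin 2) (hsj : s j = 0) : s = 0 := by
  have hf := Subtype.val_injective (p := (· ≠ j))
  have hdeg := two_mul_totalDegree_le_totalDegree_sum_sq Finset.univ
    (fun i ↦ killCompl hf (q i)) (Finset.mem_univ i)
  simp only [← map_pow, ← map_sum, ← h, killCompl_motzkin, totalDegree_one] at hdeg
  refine eq_zero_of_mem_support_of_totalDegree_killCompl_eq_zero hf (by omega) hs ?_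
  intro k hk
  exact ⟨⟨k, fun hkj ↦ Finsupp.mem_support_iff.mp hk (hkj ▸ hsj)⟩, rfl⟩

end SumOfSquares

theorem motzkin_not_sos :
    ¬ ∃ (m : ℕ) (q : Fin m → MvPolynomial (Fin 2) ℝ),
      (X 0)^4 * (X 1)^2 + (X 0)^2 * (X 1)^4 - C 3 * (X 0)^2 * (X 1)^2 + 1
        = ∑ i, (q i)^2 := by
  rintro ⟨m, q, h : motzkin = _⟩
  set u : Fin 2 →₀ ℕ := Finsupp.single 0 1 + Finsupp.single 1 1
  have hsupp (i : Fin m) : ∀ s ∈ (q i).support, s.degree ≤ 3 ∧ ∀ j, s j = 0 → s = 0 :=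
    fun s hs ↦ ⟨(le_totalDegree hs).trans (totalDegree_le_three_of_motzkin_eq_sum_sq h i),
      eq_zero_of_mem_support_of_motzkin_eq_sum_sq h i hs⟩
  have hcoeff : coeff (u + u) motzkin = ∑ i, coeff u (q i) ^ 2 := by
    rw [h, coeff_sum]
    exact Finset.sum_congr rfl fun i _ ↦ coeff_add_self_sq fun s hs t ht hst ↦
      eq_single_add_single_of_add_eq (hsupp i s hs) (hsupp i t ht) hst
  rw [coeff_motzkin] at hcoeff
  linarith [Finset.sum_nonneg fun i (_ : i ∈ Finset.univ) ↦ sq_nonneg (coeff u (q i))]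
end

section
/- Sylvester's criterion for positive semidefiniteness: a real symmetric n×n matrix is positive semidefinite if and only if all of its principal minors (determinants of submatrices obtained by selecting the same subset of rows and columns) are nonnegative. -/
/-!
Necessity: principal submatrices of a positive semidefinite matrix are positive semidefinite,
hence have nonnegative determinant.

Sufficiency: expanding `det (A + t • 1)` multilinearly in the rows gives
`∑ S, t ^ |Sᶜ| * det A[S, S]`. If all principal minors are nonnegative and `t > 0`, this is
at least the `S = ∅` term `t ^ n > 0`, so no negative number lies in the spectrum of `A`;
a symmetric real matrix with nonnegative spectrum is positive semidefinite.
-/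

namespace Matrix

open Finset

variable {n R : Type*} [Fintype n] [DecidableEq n]

theorem det_add_smul_one_eq_sum_minors [CommRing R] (A : Matrix n n R) (t : R) :
    (A + t • (1 : Matrix n n R)).det =
      ∑ S : Finset n, t ^ #Sᶜ * (A.submatrix (↑) (↑) : Matrix S S R).det := by
  let D : (n → R) [⋀^n]→ₗ[R] R := detRowAlternating
  change D (A.row + (t • (1 : Matrix n n R)).row) = _
  rw [D.map_add_univ]
  refine sum_congr rfl fun S _ => ?_
  set P := S.piecewise A.row (1 : Matrix n n R).row
  have hrows : S.piecewise A.row (t • (1 : Matrix n n R)).row =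
      Sᶜ.piecewise (fun i => t • P i) P := by
    ext i : 1
    by_cases hi : i ∈ S <;> simp only [P, Finset.piecewise, mem_compl, hi] <;> rfl
  rw [hrows, ← det_piecewise_one_eq_submatrix_det A S, ← prod_const, ← smul_eq_mul]
  exact D.toMultilinearMap.map_piecewise_smul _ _ _

theorem det_add_smul_one_pos [CommRing R] [LinearOrder R] [IsStrictOrderedRing R]
    (A : Matrix n n R) (hA : ∀ S : Finset n, 0 ≤ (A.submatrix (↑) (↑) : Matrix S S R).det)
    {t : R} (ht : 0 < t) : 0 < (A + t • (1 : Matrix n n R)).det := by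
  rw [det_add_smul_one_eq_sum_minors]
  refine sum_pos' (fun S _ => mul_nonneg (pow_nonneg ht.le _) (hA S)) ⟨∅, mem_univ _, ?_⟩
  simpa using pow_pos ht _

theorem spectrum_subset_nonneg_of_minors_nonneg [Field R] [LinearOrder R]
    [IsStrictOrderedRing R] (A : Matrix n n R)
    (hA : ∀ S : Finset n, 0 ≤ (A.submatrix (↑) (↑) : Matrix S S R).det) :
    spectrum R A ⊆ {a | 0 ≤ a} := by
  intro a ha
  rw [Set.mem_ofPred_eq]
  by_contra! hneg
  refine spectrum.mem_iff.mp ha ?_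
  have hshift : algebraMap R (Matrix n n R) a - A = -(A + (-a) • 1) := by
    rw [Algebra.algebraMap_eq_smul_one, neg_smul]
    abel
  rw [hshift, IsUnit.neg_iff, isUnit_iff_isUnit_det]
  exact (det_add_smul_one_pos A hA (neg_pos.mpr hneg)).ne'.isUnit

end Matrix

theorem sylvester_psd {n : ℕ} (A : Matrix (Fin n) (Fin n) ℝ) (hA : A.IsSymm) :
    A.PosSemidef ↔
      ∀ S : Finset (Fin n),
        0 ≤ (A.submatrix (fun i : S => (i : Fin n)) (fun i : S => (i : Fin n))).det := by
  refine ⟨fun hpsd S => (hpsd.submatrix _).det_nonneg, fun hminors => ?_⟩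
  exact Matrix.posSemidef_iff_isHermitian_and_spectrum_nonneg.mpr
    ⟨Matrix.isHermitian_iff_isSymm.mpr hA,
      Matrix.spectrum_subset_nonneg_of_minors_nonneg A hminors⟩
end
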